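/- For each sign vector ε = (ε_1,…,ε_5) ∈ {±1}^5, let L_ε ⊆ ℚ^6 be the 2-dimensional subspace spanned by (0, ε_1, ε_2, ε_3, ε_4, ε_5) and (1, 1·ε_1, 2·ε_2, 3·ε_3, 4·ε_4, 5·ε_5) (so that L_ε is the affine cone over the line x_i = ε_i(t+i) on the Büchi K3 surface X₅). Then for distinct ε, δ ∈ {±1}^5 the corresponding projective lines meet, i.e., L_ε ∩ L_δ ≠ {0}, if and only if ε and δ differ in exactly one coordinate or in all five coordinates. In particular, the intersection graph of the 32 lines on X₅ is bipartite of type (16,16) and regular of valence 6. -/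

import Mathlib

/-- The direction vector `(0, ε₁, ε₂, ε₃, ε₄, ε₅)` of the line `L_ε` on the
Büchi K3 surface `X₅`. -/
def buchiLineDir (ε : Fin 5 → ℚ) : Fin 6 → ℚ :=
  ![0, ε 0, ε 1, ε 2, ε 3, ε 4]

/-- The point `(1, 1·ε₁, 2·ε₂, 3·ε₃, 4·ε₄, 5·ε₅)` of the line `L_ε` on the
Büchi K3 surface `X₅`. -/
def buchiLinePt (ε : Fin 5 → ℚ) : Fin 6 → ℚ :=
  ![1, 1 * ε 0, 2 * ε 1, 3 * ε 2, 4 * ε 3, 5 * ε 4]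

/-- The affine cone `L_ε ⊆ ℚ⁶` over the line `x_i = ε_i(t + i)` of the Büchi
K3 surface `X₅`. -/
def buchiLine (ε : Fin 5 → ℚ) : Submodule ℚ (Fin 6 → ℚ) :=
  Submodule.span ℚ {buchiLineDir ε, buchiLinePt ε}

/-!
The cone `L_ε` consists of the vectors `(b, (a + b) ε₁, …, (a + 5b) ε₅)`. A common nonzero
vector of `L_ε` and `L_δ` therefore has the same `b` on both lines and parameters `a`, `c` with
`(a + b i) ε_i = (c + b i) δ_i` for every `i`. If `ε` and `δ` agree somewhere then `a = c`, and
every coordinate where they differ forces `a + c + 2 b i = 0`, so `a = -b i`; two such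
coordinates force `b = 0` and then `a = 0`. Conversely, if they differ only at `i` the point
`t = -i` is common, and if `δ = -ε` the two lines share their point at infinity.
-/

lemma sign_eq_neg_of_ne {R : Type*} [Ring R] {s t : R} (hs : s = 1 ∨ s = -1)
    (ht : t = 1 ∨ t = -1) (h : s ≠ t) : t = -s := by
  rcases hs with rfl | rfl <;> rcases ht with rfl | rfl <;> simp_all

lemma ne_zero_of_eq_one_or_neg_one {R : Type*} [Ring R] [Nontrivial R] {s : R}
    (hs : s = 1 ∨ s = -1) : s ≠ 0 := by
  rcases hs with rfl | rfl <;> simp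

lemma mem_buchiLine_iff {ε : Fin 5 → ℚ} {v : Fin 6 → ℚ} :
    v ∈ buchiLine ε ↔ ∃ a : ℚ, ∀ k : Fin 5, v k.succ = (a + v 0 * ((k : ℕ) + 1)) * ε k := by
  rw [buchiLine, Submodule.mem_span_pair]
  constructor
  · rintro ⟨a, b, rfl⟩
    refine ⟨a, fun k => ?_⟩
    fin_cases k <;> simp [buchiLineDir, buchiLinePt] <;> ring
  · rintro ⟨a, ha⟩
    refine ⟨a, v 0, funext fun m => Fin.cases ?_ (fun k => ?_) m⟩
    · simp [buchiLineDir, buchiLinePt]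
    · rw [ha k]
      fin_cases k <;> simp [buchiLineDir, buchiLinePt] <;> ring

lemma buchiLine_inf_ne_bot_of_forall_ne_eq {ε δ : Fin 5 → ℚ} (i : Fin 5)
    (h : ∀ k, k ≠ i → ε k = δ k) : buchiLine ε ⊓ buchiLine δ ≠ ⊥ := by
  set v : Fin 6 → ℚ := Fin.cons 1 fun k => (((k : ℕ) : ℚ) - i) * ε k
  have hv0 : v 0 = 1 := rfl
  have hvε : v ∈ buchiLine ε :=
    mem_buchiLine_iff.2 ⟨-((i : ℕ) + 1), fun k => by simp only [v, Fin.cons_succ, hv0]; ring⟩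
  have hvδ : v ∈ buchiLine δ := by
    refine mem_buchiLine_iff.2 ⟨-((i : ℕ) + 1), fun k => ?_⟩
    simp only [v, Fin.cons_succ, hv0]
    rcases eq_or_ne k i with rfl | hk
    · ring
    · rw [h k hk]; ring
  exact (Submodule.ne_bot_iff _).2 ⟨v, ⟨hvε, hvδ⟩, fun h => by simpa [hv0] using congrFun h 0⟩

lemma buchiLine_inf_neg_ne_bot {ε : Fin 5 → ℚ} (hε : ε ≠ 0) :
    buchiLine ε ⊓ buchiLine (-ε) ≠ ⊥ := by
  set v : Fin 6 → ℚ := Fin.cons 0 ε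
  have hv0 : v 0 = 0 := rfl
  have hvε : v ∈ buchiLine ε := mem_buchiLine_iff.2 ⟨1, fun k => by simp [v, hv0]⟩
  have hvδ : v ∈ buchiLine (-ε) := mem_buchiLine_iff.2 ⟨-1, fun k => by simp [v, hv0]⟩
  refine (Submodule.ne_bot_iff _).2 ⟨v, ⟨hvε, hvδ⟩, fun h => hε (funext fun k => ?_)⟩
  simpa [v] using congrFun h k.succ

lemma eq_zero_of_mem_buchiLine_inf {ε δ : Fin 5 → ℚ} (hε : ∀ i, ε i = 1 ∨ ε i = -1)
    (hδ : ∀ i, δ i = 1 ∨ δ i = -1) {k₀ i j : Fin 5} (hk₀ : ε k₀ = δ k₀) (hi : ε i ≠ δ i)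
    (hj : ε j ≠ δ j) (hij : i ≠ j) {v : Fin 6 → ℚ} (hv : v ∈ buchiLine ε ⊓ buchiLine δ) :
    v = 0 := by
  obtain ⟨⟨a, ha⟩, ⟨c, hc⟩⟩ := And.imp mem_buchiLine_iff.1 mem_buchiLine_iff.1 hv
  set b := v 0
  have hac : a = c := by
    have := (ha k₀).symm.trans (hc k₀)
    rw [← hk₀] at this
    linarith [mul_right_cancel₀ (ne_zero_of_eq_one_or_neg_one (hε k₀)) this]
  have hdiff : ∀ m, ε m ≠ δ m → a + c + 2 * b * ((m : ℕ) + 1) = 0 := by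
    intro m hm
    have := (ha m).symm.trans (hc m)
    rw [sign_eq_neg_of_ne (hε m) (hδ m) hm] at this
    have hsum : (a + c + 2 * b * ((m : ℕ) + 1)) * ε m = 0 := by linear_combination this
    exact (mul_eq_zero.1 hsum).resolve_right (ne_zero_of_eq_one_or_neg_one (hε m))
  have hb : b = 0 := by
    have hij' : ((i : ℕ) : ℚ) - j ≠ 0 := sub_ne_zero.2 (by exact_mod_cast Fin.val_ne_of_ne hij)
    have : 2 * b * (((i : ℕ) : ℚ) - j) = 0 := by linear_combination hdiff i hi - hdiff j hj
    simpa [hij'] using this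
  have ha0 : a = 0 := by
    have := hdiff i hi
    rw [hb, ← hac] at this
    linarith
  refine funext fun m => Fin.cases hb (fun k => ?_) m
  simp [ha k, ha0, hb]

open scoped Classical in
/-- Two distinct lines `L_ε`, `L_δ` (with `ε, δ ∈ {±1}⁵`) of the Büchi K3
surface `X₅` meet (i.e. the cones `L_ε` and `L_δ` intersect nontrivially) if
and only if `ε` and `δ` differ in exactly one coordinate or in all five
coordinates.  In particular the intersection graph of the `32` lines of `X₅`
is bipartite of type `(16,16)` and regular of valence `6`. -/
theorem buchi_lines_intersection (ε δ : Fin 5 → ℚ)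
    (hε : ∀ i, ε i = 1 ∨ ε i = -1) (hδ : ∀ i, δ i = 1 ∨ δ i = -1)
    (hne : ε ≠ δ) :
    buchiLine ε ⊓ buchiLine δ ≠ ⊥ ↔
      ((Finset.univ.filter (fun i : Fin 5 => ε i ≠ δ i)).card = 1 ∨
       (Finset.univ.filter (fun i : Fin 5 => ε i ≠ δ i)).card = 5) := by
  set D := Finset.univ.filter (fun i : Fin 5 => ε i ≠ δ i)
  constructor
  · intro hmeet
    by_contra! hcard
    have hD : D.Nonempty := by
      obtain ⟨i, hi⟩ := Function.ne_iff.1 hne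
      exact ⟨i, by simpa [D] using hi⟩
    obtain ⟨i, hi, j, hj, hij⟩ := (Finset.one_lt_card (s := D)).1 (by have := hD.card_pos; omega)
    obtain ⟨k₀, hk₀⟩ : ∃ k₀, k₀ ∉ D := by
      by_contra! hall
      exact hcard.2 (by rw [Finset.eq_univ_iff_forall.2 hall]; rfl)
    refine hmeet (eq_bot_iff.2 fun v hv => ?_)
    simp only [D, Finset.mem_filter, Finset.mem_univ, true_and, not_not] at hi hj hk₀
    exact eq_zero_of_mem_buchiLine_inf hε hδ hk₀ hi hj hij hv
  · rintro (h1 | h5)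
    · obtain ⟨i, hi⟩ := Finset.card_eq_one.1 h1
      refine buchiLine_inf_ne_bot_of_forall_ne_eq i fun k hk => not_not.1 fun hk' => hk ?_
      have hkD : k ∈ D := by simpa [D] using hk'
      simpa [hi] using hkD
    · have hall : ∀ k, k ∈ D := by simp [Finset.eq_univ_of_card D h5]
      have hneg : δ = -ε := funext fun k =>
        sign_eq_neg_of_ne (hε k) (hδ k) (by simpa [D] using hall k)
      subst hneg
      exact buchiLine_inf_neg_ne_bot fun h => ne_zero_of_eq_one_or_neg_one (hε 0) (congrFun h 0)
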